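/- Let A = (M,R) be a hypergraph with ∅ self-sufficient, G its associated pregeometry, and Σ = {E₁,...,E_k} a finite set of finite-dimensional closed sets in G. Then Δ_G(Σ) ≥ d_G(E₁ ∪ ... ∪ E_k); i.e., the pregeometry associated to a hypergraph is flat. -/

import Mathlib

open scoped Classical

/-- A combinatorial pregeometry (matroid) on the ground type `α`, given by a
dimension (rank) function on finite subsets. -/
structure Pregeometry (α : Type*) [DecidableEq α] where
  dim : Finset α → ℕ
  dim_empty : dim ∅ = 0
  dim_le_insert : ∀ (A : Finset α) (x : α), dim A ≤ dim (insert x A)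
  insert_le_dim : ∀ (A : Finset α) (x : α), dim (insert x A) ≤ dim A + 1
  submodular : ∀ A B : Finset α, dim (A ∪ B) + dim (A ∩ B) ≤ dim A + dim B

namespace Pregeometry

variable {α : Type*} [DecidableEq α] (G : Pregeometry α)

/-- Closure of an arbitrary subset. -/
def cl (Y : Set α) : Set α :=
  {x | ∃ A : Finset α, ↑A ⊆ Y ∧ G.dim (insert x A) = G.dim A}

/-- `Y` is closed (in the ambient pregeometry `G`). -/
def IsClosed (Y : Set α) : Prop := G.cl Y = Y

/-- `X` is a closed set of the subpregeometry of `G` induced on `P`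
(whose closure operator is `Y ↦ cl Y ∩ P`). -/
def IsClosedIn (P X : Set α) : Prop := X ⊆ P ∧ G.cl X ∩ P = X

/-- Dimension of an arbitrary subset, with value `⊤` when infinite-dimensional. -/
noncomputable def edim (Y : Set α) : ℕ∞ :=
  ⨆ (A : Finset α) (_ : ↑A ⊆ Y), (G.dim A : ℕ∞)

/-- The (natural number) dimension of a finite-dimensional subset. -/
noncomputable def sdim (Y : Set α) : ℕ := (G.edim Y).toNat

/-- The alternating inclusion–exclusion sum
`Δ_G(Σ) = Σ_{∅ ≠ S ⊆ Σ} (-1)^{|S|+1} d(⋂ S)` of a finite collection of sets. -/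
noncomputable def flatSum (Sig : Finset (Set α)) : ℤ :=
  ∑ S ∈ Sig.powerset.filter (· ≠ ∅),
    (-1) ^ (S.card + 1) * (G.sdim (⋂₀ ↑S) : ℤ)

/-- `P ⊑* Q`: for the subpregeometries induced on `P ⊆ Q`, the dimension of the
intersection of two closed sets of `P` equals the dimension of the intersection
of their closures in `Q` (the closure of `X` in `Q` being `cl X ∩ Q`). -/
def SqStar (P Q : Set α) : Prop := P ⊆ Q ∧
  ∀ X₁ X₂ : Set α, G.IsClosedIn P X₁ → G.IsClosedIn P X₂ →
    G.edim (X₁ ∩ X₂) = G.edim (G.cl X₁ ∩ G.cl X₂ ∩ Q)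

/-- `P ⊑ Q`: `P` is strongly embedded in `Q`: for every finite collection `Σ` of
finite-dimensional closed sets of `Q`, `Δ_P(Σ_P) ≤ Δ_Q(Σ)` where
`Σ_P = {E ∩ P : E ∈ Σ}`. -/
def Sq (P Q : Set α) : Prop := P ⊆ Q ∧
  ∀ Sig : Finset (Set α), (∀ E ∈ Sig, G.IsClosedIn Q E) →
    (∀ E ∈ Sig, G.edim E ≠ ⊤) →
    G.flatSum (Sig.image (· ∩ P)) ≤ G.flatSum Sig

/-- The subpregeometry induced on `P` is flat: every finite collection of
finite-dimensional closed sets satisfies `d(⋃ Σ) ≤ Δ(Σ)`. -/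
def FlatIn (P : Set α) : Prop :=
  ∀ Sig : Finset (Set α), (∀ E ∈ Sig, G.IsClosedIn P E) →
    (∀ E ∈ Sig, G.edim E ≠ ⊤) →
    (G.sdim (⋃₀ ↑Sig) : ℤ) ≤ G.flatSum Sig

/-- The α-function of the subpregeometry of `G` induced on `P`:
`α(X) = |X| − d(X) − Σ_{Y ⊊ X closed} α(Y)`. -/
noncomputable def alphaIn (P : Set α) (X : Finset α) : ℤ :=
  (X.card : ℤ) - (G.dim X : ℤ) -
    ∑ Y ∈ (X.powerset.filter fun Y => Y ≠ X ∧ G.IsClosedIn P ↑Y).attach,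
      alphaIn P Y.1
termination_by X.card
decreasing_by
  have h := Y.2
  simp only [Finset.mem_filter, Finset.mem_powerset] at h
  exact Finset.card_lt_card (lt_of_le_of_ne h.1 h.2.1)

end Pregeometry

/-- A hypergraph on the vertex type `α`: a set of nonempty finite edges. -/
structure Hypergraph' (α : Type*) where
  edges : Set (Finset α)
  nonempty_edges : ∀ e ∈ edges, e ≠ ∅

namespace Hypergraph'

variable {α : Type*} [DecidableEq α] (A : Hypergraph' α)

/-- The set of edges contained in a set of vertices. -/
def edgesIn (P : Set α) : Set (Finset α) := {e | e ∈ A.edges ∧ ↑e ⊆ P}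

/-- The predimension `δ(P) = |P| − |R[P]|` of a finite set of vertices. -/
noncomputable def delta (P : Finset α) : ℤ :=
  (P.card : ℤ) - (A.edgesIn ↑P).ncard

/-- The relative predimension `δ(L/P) = |L∖P| − |R[L∪P]∖R[P]|`. -/
noncomputable def deltaRel (L : Finset α) (P : Set α) : ℤ :=
  ((↑L \ P : Set α).ncard : ℤ) -
    ({e | e ∈ A.edges ∧ ↑e ⊆ ↑L ∪ P ∧ ¬ ↑e ⊆ P} : Set (Finset α)).ncard

/-- `P` is self-sufficient in `A`: `δ(X/P) ≥ 0` for every finite `X`, stated so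
as to be meaningful even when infinitely many edges are involved. -/
def SelfSuff (P : Set α) : Prop :=
  ∀ X : Finset α, ∀ Es : Finset (Finset α),
    (∀ e ∈ Es, e ∈ A.edges ∧ ↑e ⊆ ↑X ∪ P ∧ ¬ ↑e ⊆ P) →
    (Es.card : ℤ) ≤ ((↑X \ P : Set α).ncard : ℤ)

/-- The dimension function associated to a hypergraph:
`d(X) = inf {δ(B) : X ⊆ B finite}`. -/
noncomputable def hdim (X : Finset α) : ℤ :=
  sInf {d : ℤ | ∃ B : Finset α, X ⊆ B ∧ d = A.delta B}

/-- The induced subhypergraph on a set `P` of vertices (keeping `α` as the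
ambient vertex type). -/
def restrict (P : Set α) : Hypergraph' α :=
  ⟨{e | e ∈ A.edges ∧ ↑e ⊆ P}, fun e he => A.nonempty_edges e he.1⟩

/-- A pregeometry `G` is represented by the hypergraph `A` if the associated
dimension function of `A` is the dimension function of `G`. -/
def Represents (G : Pregeometry α) : Prop :=
  ∀ X : Finset α, (G.dim X : ℤ) = A.hdim X

end Hypergraph'

/-! Given a finite `B ⊆ ⋃ Σ`, take a finite `C ⊇ B` that contains a basis of every intersection
`⋂ S` (`∅ ≠ S ⊆ Σ`) and is self-sufficient, i.e. `δ(C) = d(C)`. The trace of a self-sufficient set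
on a closed set is self-sufficient, so `δ(C ∩ ⋂ S) = d(⋂ S)`. Inclusion–exclusion for `δ` over the
traces `C ∩ E` is exact on vertices and can only undercount edges, which gives
`d(B) ≤ δ(C ∩ ⋃ Σ) ≤ Δ(Σ)`. -/

namespace Pregeometry

variable {α : Type*} [DecidableEq α] (G : Pregeometry α)

theorem dim_mono {B C : Finset α} (h : B ⊆ C) : G.dim B ≤ G.dim C := by
  have key : ∀ D : Finset α, G.dim B ≤ G.dim (B ∪ D) := by
    intro D
    induction D using Finset.induction_on with
    | empty => simp
    | insert x D _ ih =>
      rw [Finset.union_insert]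
      exact ih.trans (G.dim_le_insert _ x)
  simpa [Finset.union_eq_right.mpr h] using key C

theorem cl_mono {Y Z : Set α} (h : Y ⊆ Z) : G.cl Y ⊆ G.cl Z := by
  rintro x ⟨B, hB, hd⟩
  exact ⟨B, hB.trans h, hd⟩

theorem cl_sInter_subset {S : Set (Set α)} (hS : ∀ E ∈ S, G.cl E ⊆ E) :
    G.cl (⋂₀ S) ⊆ ⋂₀ S :=
  fun _ hx E hE => hS E hE (G.cl_mono (Set.sInter_subset_of_mem hE) hx)

theorem dim_le_edim {Y : Set α} {B : Finset α} (hB : ↑B ⊆ Y) : (G.dim B : ℕ∞) ≤ G.edim Y :=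
  le_iSup₂ (f := fun (B : Finset α) (_ : ↑B ⊆ Y) => (G.dim B : ℕ∞)) B hB

theorem edim_mono {Y Z : Set α} (h : Y ⊆ Z) : G.edim Y ≤ G.edim Z :=
  iSup₂_le fun _ hB => G.dim_le_edim (hB.trans h)

theorem dim_le_sdim {Y : Set α} (hY : G.edim Y ≠ ⊤) {B : Finset α} (hB : ↑B ⊆ Y) :
    G.dim B ≤ G.sdim Y :=
  ENat.toNat_le_toNat (G.dim_le_edim hB) hY

theorem exists_dim_eq_sdim {Y : Set α} (hY : G.edim Y ≠ ⊤) :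
    ∃ B : Finset α, ↑B ⊆ Y ∧ G.dim B = G.sdim Y := by
  have hsup : G.edim Y = ⨆ B : {B : Finset α // ↑B ⊆ Y}, (G.dim B.1 : ℕ∞) := by
    rw [edim, iSup_subtype']
  have : Nonempty {B : Finset α // ↑B ⊆ Y} := ⟨⟨∅, by simp⟩⟩
  obtain ⟨⟨B, hB⟩, hBY⟩ := ENat.exists_eq_iSup_of_lt_top (hsup ▸ hY.lt_top)
  exact ⟨B, hB, by rw [sdim, hsup, ← hBY, ENat.toNat_natCast]⟩

theorem sdim_le_of_forall_dim_le {Y : Set α} {m : ℤ}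
    (h : ∀ B : Finset α, ↑B ⊆ Y → (G.dim B : ℤ) ≤ m) : (G.sdim Y : ℤ) ≤ m := by
  have hm : 0 ≤ m := by simpa [G.dim_empty] using h ∅ (by simp)
  have hle : G.edim Y ≤ (m.toNat : ℕ∞) :=
    iSup₂_le fun B hB => by
      have := h B hB
      exact_mod_cast (show (G.dim B : ℤ) ≤ m.toNat by omega)
  have := ENat.toNat_le_toNat hle (ENat.natCast_ne_top _)
  rw [ENat.toNat_natCast] at this
  unfold sdim
  omega

theorem exists_finset_dim_filter_eq_sdim {ι : Type*} (s : Finset ι) (T : ι → Set α)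
    (hT : ∀ i ∈ s, G.edim (T i) ≠ ⊤) :
    ∃ X : Finset α, ∀ C : Finset α, X ⊆ C →
      ∀ i ∈ s, G.dim (C.filter (· ∈ T i)) = G.sdim (T i) := by
  choose! span hspan_sub hspan_dim using fun i hi => G.exists_dim_eq_sdim (hT i hi)
  refine ⟨s.biUnion span, fun C hC i hi => le_antisymm ?_ ?_⟩
  · exact G.dim_le_sdim (hT i hi) fun x hx => (Finset.mem_filter.mp hx).2
  · rw [← hspan_dim i hi]
    refine G.dim_mono fun x hx => Finset.mem_filter.mpr ⟨hC ?_, hspan_sub i hi hx⟩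
    exact Finset.mem_biUnion.mpr ⟨i, hi, hx⟩

end Pregeometry

theorem card_filter_exists_eq_sum_powerset {ι β : Type*} (F : Finset β) (s : Finset ι)
    (p : ι → β → Prop) :
    ((F.filter fun b => ∃ i ∈ s, p i b).card : ℤ) =
      ∑ t ∈ s.powerset.filter (· ≠ ∅),
        (-1) ^ (t.card + 1) * ((F.filter fun b => ∀ i ∈ t, p i b).card : ℤ) := by
  have hunion : F.filter (fun b => ∃ i ∈ s, p i b) = s.biUnion fun i => F.filter (p i) := by
    ext b
    simp only [Finset.mem_filter, Finset.mem_biUnion]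
    tauto
  have hinter : ∀ (t : Finset ι) (ht : t.Nonempty),
      t.inf' ht (fun i => F.filter (p i)) = F.filter fun b => ∀ i ∈ t, p i b := by
    intro t ht
    ext b
    simp only [Finset.mem_inf', Finset.mem_filter]
    obtain ⟨i, hi⟩ := ht
    exact ⟨fun h => ⟨(h i hi).1, fun j hj => (h j hj).2⟩, fun h j hj => ⟨h.1, h.2 j hj⟩⟩
  rw [hunion, Finset.inclusion_exclusion_card_biUnion]
  simp_rw [hinter]
  rw [Finset.sum_coe_sort (s.powerset.filter (·.Nonempty))
    (fun t => (-1 : ℤ) ^ (t.card + 1) * ((F.filter fun b => ∀ i ∈ t, p i b).card : ℤ))]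
  simp_rw [Finset.nonempty_iff_ne_empty]

namespace Hypergraph'

variable {α : Type*} (A : Hypergraph' α)

theorem finite_edgesIn (P : Finset α) : (A.edgesIn ↑P).Finite :=
  P.powerset.finite_toSet.subset fun e he => by simpa using he.2

theorem ncard_edgesIn_filter (C : Finset α) (T : Set α) :
    (A.edgesIn ↑(C.filter (· ∈ T))).ncard =
      ((A.finite_edgesIn C).toFinset.filter fun e => ↑e ⊆ T).card := by
  rw [Set.ncard_eq_toFinset_card _ (A.finite_edgesIn _)]
  congr 1
  ext e
  have hcoe : (↑(C.filter (· ∈ T)) : Set α) = ↑C ∩ T := by ext; simp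
  simp only [Set.Finite.mem_toFinset, Finset.mem_filter, edgesIn, Set.mem_ofPred_eq, hcoe,
    Set.subset_inter_iff, and_assoc]

theorem delta_union_add_delta_inter_le [DecidableEq α] (U V : Finset α) :
    A.delta (U ∪ V) + A.delta (U ∩ V) ≤ A.delta U + A.delta V := by
  have hinter : A.edgesIn ↑(U ∩ V) = A.edgesIn ↑U ∩ A.edgesIn ↑V := by
    ext e
    simp only [edgesIn, Set.mem_ofPred_eq, Set.mem_inter_iff, Finset.coe_inter,
      Set.subset_inter_iff]
    tauto
  have hunion : A.edgesIn ↑U ∪ A.edgesIn ↑V ⊆ A.edgesIn ↑(U ∪ V) :=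
    Set.union_subset (fun e he => ⟨he.1, he.2.trans (by simp)⟩)
      (fun e he => ⟨he.1, he.2.trans (by simp)⟩)
  have hedges := Set.ncard_union_add_ncard_inter _ _ (A.finite_edgesIn U) (A.finite_edgesIn V)
  have hle := Set.ncard_le_ncard hunion (A.finite_edgesIn (U ∪ V))
  have hvertices := Finset.card_union_add_card_inter U V
  unfold delta
  rw [hinter]
  omega

theorem delta_filter_sUnion_le (C : Finset α) (Sig : Finset (Set α)) :
    A.delta (C.filter (· ∈ ⋃₀ ↑Sig)) ≤
      ∑ S ∈ Sig.powerset.filter (· ≠ ∅), (-1) ^ (S.card + 1) * A.delta (C.filter (· ∈ ⋂₀ ↑S)) := by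
  simp only [delta, ncard_edgesIn_filter, mul_sub, Finset.sum_sub_distrib]
  set Fe := (A.finite_edgesIn C).toFinset
  have hvertices : ((C.filter (· ∈ ⋃₀ (↑Sig : Set (Set α)))).card : ℤ) =
      ∑ S ∈ Sig.powerset.filter (· ≠ ∅),
        (-1) ^ (S.card + 1) * ((C.filter (· ∈ ⋂₀ (↑S : Set (Set α)))).card : ℤ) := by
    simpa [Set.mem_sUnion, Set.mem_sInter] using
      card_filter_exists_eq_sum_powerset C Sig fun E x => x ∈ E
  have hedges : ((Fe.filter fun e => ∃ E ∈ Sig, ↑e ⊆ E).card : ℤ) =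
      ∑ S ∈ Sig.powerset.filter (· ≠ ∅),
        (-1) ^ (S.card + 1) * ((Fe.filter fun e => ↑e ⊆ ⋂₀ (↑S : Set (Set α))).card : ℤ) := by
    simpa [Set.subset_sInter_iff] using
      card_filter_exists_eq_sum_powerset Fe Sig fun E e => ↑e ⊆ E
  have hmono : (Fe.filter fun e => ∃ E ∈ Sig, ↑e ⊆ E).card ≤
      (Fe.filter fun e => ↑e ⊆ ⋃₀ (↑Sig : Set (Set α))).card :=
    Finset.card_le_card fun e he => by
      obtain ⟨he, E, hE, heE⟩ := Finset.mem_filter.mp he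
      exact Finset.mem_filter.mpr ⟨he, heE.trans (Set.subset_sUnion_of_mem hE)⟩
  rw [← hvertices, ← hedges]
  omega

section SelfSufficient

variable {A} (hA : A.SelfSuff ∅)
include hA

theorem delta_nonneg (P : Finset α) : 0 ≤ A.delta P := by
  have h := hA P (A.finite_edgesIn P).toFinset fun e he => by
    rw [Set.Finite.mem_toFinset] at he
    refine ⟨he.1, by simpa using he.2, fun he' => A.nonempty_edges e he.1 ?_⟩
    simpa using he'
  rw [Set.sdiff_empty, Set.ncard_coe_finset,
    ← Set.ncard_eq_toFinset_card _ (A.finite_edgesIn P)] at h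
  unfold delta
  omega

theorem bddBelow_delta_supersets (X : Finset α) :
    BddBelow {d : ℤ | ∃ B : Finset α, X ⊆ B ∧ d = A.delta B} :=
  ⟨0, by rintro d ⟨B, -, rfl⟩; exact delta_nonneg hA B⟩

theorem hdim_le_delta {X B : Finset α} (h : X ⊆ B) : A.hdim X ≤ A.delta B :=
  csInf_le (bddBelow_delta_supersets hA X) ⟨B, h, rfl⟩

theorem exists_superset_delta_eq_hdim (X : Finset α) :
    ∃ B : Finset α, X ⊆ B ∧ A.delta B = A.hdim X := by
  obtain ⟨B, hXB, hB⟩ : A.hdim X ∈ {d : ℤ | ∃ B : Finset α, X ⊆ B ∧ d = A.delta B} :=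
    Int.csInf_mem ⟨A.delta X, X, subset_rfl, rfl⟩ (bddBelow_delta_supersets hA X)
  exact ⟨B, hXB, hB.symm⟩

theorem hdim_mono {X Y : Finset α} (h : X ⊆ Y) : A.hdim X ≤ A.hdim Y := by
  obtain ⟨B, hYB, hB⟩ := exists_superset_delta_eq_hdim hA Y
  exact hB ▸ hdim_le_delta hA (h.trans hYB)

theorem exists_superset_delta_eq_hdim_self (X : Finset α) :
    ∃ C : Finset α, X ⊆ C ∧ A.delta C = A.hdim C := by
  obtain ⟨C, hXC, hC⟩ := exists_superset_delta_eq_hdim hA X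
  exact ⟨C, hXC, le_antisymm (hC ▸ hdim_mono hA hXC) (hdim_le_delta hA subset_rfl)⟩

variable [DecidableEq α]

theorem delta_inter_le {C : Finset α} (hC : A.delta C = A.hdim C) (W : Finset α) :
    A.delta (W ∩ C) ≤ A.delta W := by
  have hsub := A.delta_union_add_delta_inter_le W C
  have hmin := hdim_le_delta hA (Finset.subset_union_right (s₁ := W) (s₂ := C))
  omega

theorem mem_cl_of_hdim_insert_le {G : Pregeometry α} (hrep : A.Represents G) {x : α}
    {X : Finset α} (h : A.hdim (insert x X) ≤ A.hdim X) : x ∈ G.cl ↑X := by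
  refine ⟨X, subset_rfl, ?_⟩
  have hge := hdim_mono hA (Finset.subset_insert x X)
  have : (G.dim (insert x X) : ℤ) = G.dim X := by rw [hrep, hrep]; omega
  exact_mod_cast this

/-- The trace of `C` on a closed set is again self-sufficient: a `δ`-minimal superset `B` of the
trace lies in its closure, hence in `E`, so intersecting `B` with `C` gives back the trace. -/
theorem delta_filter_eq_hdim {G : Pregeometry α} (hrep : A.Represents G) {C : Finset α}
    (hC : A.delta C = A.hdim C) {E : Set α} (hE : G.cl E ⊆ E) :
    A.delta (C.filter (· ∈ E)) = A.hdim (C.filter (· ∈ E)) := by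
  set D := C.filter (· ∈ E)
  obtain ⟨B, hDB, hB⟩ := exists_superset_delta_eq_hdim hA D
  have hBcl : ↑B ⊆ G.cl ↑D := fun x hx =>
    mem_cl_of_hdim_insert_le hA hrep (hB ▸ hdim_le_delta hA (Finset.insert_subset hx hDB))
  have hDE : G.cl ↑D ⊆ E := (G.cl_mono fun x hx => (Finset.mem_filter.mp hx).2).trans hE
  have hBC : B ∩ C = D := by
    refine subset_antisymm (fun x hx => ?_) (Finset.subset_inter hDB (Finset.filter_subset _ _))
    obtain ⟨hxB, hxC⟩ := Finset.mem_inter.mp hx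
    exact Finset.mem_filter.mpr ⟨hxC, hDE (hBcl hxB)⟩
  have := delta_inter_le hA hC B
  rw [hBC] at this
  exact le_antisymm (this.trans hB.le) (hdim_le_delta hA subset_rfl)

end SelfSufficient

end Hypergraph'

/-- the pregeometry associated to a hypergraph with `∅`
self-sufficient is flat: `Δ_G(Σ) ≥ d_G(⋃ Σ)` for every finite collection `Σ`
of finite-dimensional closed sets. -/
theorem hypergraph_pregeometry_flat {α : Type*} [DecidableEq α]
    (A : Hypergraph' α) (hA : A.SelfSuff ∅) (G : Pregeometry α)
    (hrep : A.Represents G) : G.FlatIn Set.univ := by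
  intro Sig hclosed hfin
  set P := Sig.powerset.filter (· ≠ ∅)
  have hsub : ∀ S ∈ P, S ⊆ Sig := fun S hS => Finset.mem_powerset.mp (Finset.mem_filter.mp hS).1
  have hfinP : ∀ S ∈ P, G.edim (⋂₀ ↑S) ≠ ⊤ := fun S hS => by
    obtain ⟨E, hE⟩ := Finset.nonempty_iff_ne_empty.mpr (Finset.mem_filter.mp hS).2
    exact ne_top_of_le_ne_top (hfin E (hsub S hS hE)) (G.edim_mono (Set.sInter_subset_of_mem hE))
  have hclP : ∀ S ∈ P, G.cl (⋂₀ ↑S) ⊆ ⋂₀ ↑S := fun S hS =>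
    G.cl_sInter_subset fun E hE => by simpa using (hclosed E (hsub S hS hE)).2.le
  obtain ⟨X, hX⟩ := G.exists_finset_dim_filter_eq_sdim P (fun S => ⋂₀ ↑S) hfinP
  refine G.sdim_le_of_forall_dim_le fun B hB => ?_
  obtain ⟨C, hBXC, hC⟩ := Hypergraph'.exists_superset_delta_eq_hdim_self hA (B ∪ X)
  have hterm : ∀ S ∈ P, A.delta (C.filter (· ∈ ⋂₀ ↑S)) = G.sdim (⋂₀ ↑S) := fun S hS => by
    rw [Hypergraph'.delta_filter_eq_hdim hA hrep hC (hclP S hS), ← hrep,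
      hX C (Finset.union_subset_right hBXC) S hS]
  calc (G.dim B : ℤ) = A.hdim B := hrep B
    _ ≤ A.hdim (C.filter (· ∈ ⋃₀ ↑Sig)) := Hypergraph'.hdim_mono hA fun x hx =>
        Finset.mem_filter.mpr ⟨hBXC (Finset.mem_union_left _ hx), hB hx⟩
    _ ≤ A.delta (C.filter (· ∈ ⋃₀ ↑Sig)) := Hypergraph'.hdim_le_delta hA subset_rfl
    _ ≤ _ := A.delta_filter_sUnion_le C Sig
    _ = G.flatSum Sig := Finset.sum_congr rfl fun S hS => by rw [hterm S hS]
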